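/- Let p be a prime with p ≡ 3 (mod 4), K = GaloisField p 2, ι : ZMod p →+* K the algebra map, and i : K with i² = -1. Then for all a, b in ZMod p, (ι a + i * ι b)^(2(p+1)) = ι ((a² + b²)²). -/

import Mathlib

/-!
Since `p ≡ 3 (mod 4)`, the Frobenius `x ↦ x ^ p` sends `i` to `-i` and fixes `ZMod p`, so it acts
on `z = a + i b` as complex conjugation. Hence `z ^ (p + 1) = z̄ z = a ^ 2 + b ^ 2`, and squaring
gives the claim.
-/

theorem pow_eq_neg_of_sq_eq_neg_one {R : Type*} [Ring R] {p : ℕ} (hp : p % 4 = 3) {i : R}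
    (hi : i ^ 2 = -1) : i ^ p = -i := by
  obtain ⟨k, rfl⟩ : ∃ k, p = 2 * (2 * k + 1) + 1 := ⟨p / 4, by omega⟩
  rw [pow_succ, pow_mul, hi, Odd.neg_one_pow ⟨k, rfl⟩, neg_one_mul]

section Gaussian

variable {K : Type*} [CommRing K] {p : ℕ} [Fact p.Prime] [CharP K p] [Algebra (ZMod p) K]
  {i : K}

theorem gaussian_pow_char (hp : p % 4 = 3) (hi : i ^ 2 = -1) (a b : ZMod p) :
    (algebraMap (ZMod p) K a + i * algebraMap (ZMod p) K b) ^ p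
      = algebraMap (ZMod p) K a - i * algebraMap (ZMod p) K b := by
  rw [add_pow_char, mul_pow, pow_eq_neg_of_sq_eq_neg_one hp hi, ← map_pow, ← map_pow,
    ZMod.pow_card, ZMod.pow_card, neg_mul, sub_eq_add_neg]

theorem gaussian_pow_succ_eq_norm (hp : p % 4 = 3) (hi : i ^ 2 = -1) (a b : ZMod p) :
    (algebraMap (ZMod p) K a + i * algebraMap (ZMod p) K b) ^ (p + 1)
      = algebraMap (ZMod p) K (a ^ 2 + b ^ 2) := by
  rw [pow_succ, gaussian_pow_char hp hi, map_add, map_pow, map_pow]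
  linear_combination (-algebraMap (ZMod p) K b ^ 2) * hi

end Gaussian

theorem gaussian_supra_norm_power (p : ℕ) [Fact p.Prime] (hp : p % 4 = 3)
    (i : GaloisField p 2) (hi : i ^ 2 = -1) :
    ∀ a b : ZMod p,
      (algebraMap (ZMod p) (GaloisField p 2) a + i * algebraMap (ZMod p) (GaloisField p 2) b) ^ (2 * (p + 1))
        = algebraMap (ZMod p) (GaloisField p 2) ((a ^ 2 + b ^ 2) ^ 2) := by
  intro a b
  rw [mul_comm 2, pow_mul, gaussian_pow_succ_eq_norm hp hi, map_pow]
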